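/- For all natural numbers m < n, we have G_m ≤ G_n and it is not the case that G_n ≤ G_m; in particular, the games G_0, G_1, G_2, … are pairwise non-equivalent. -/

import Mathlib

universe u

namespace SetTheory

/-- Pre-game (removed from Mathlib; restated with its old Mathlib definition). -/
inductive PGame : Type (u + 1)
  | mk : ∀ α β : Type u, (α → PGame) → (β → PGame) → PGame

namespace PGame

/-- The pre-game `0 = { | }`, as in the old Mathlib. -/
instance : Zero PGame :=
  ⟨⟨PEmpty, PEmpty, PEmpty.elim, PEmpty.elim⟩⟩

end PGame

end SetTheory

/-- Combinatorial games over a poset `A` of atoms: either an atomic game `[a]` for an atom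
`a : A`, or a composite game `⟨L|R⟩` where `L` and `R` are nonempty families of games
(the left and right options). -/
inductive PoGame (A : Type u) : Type (u + 1) where
  | atom : A → PoGame A
  | mk : (xl xr : Type u) → (xl → PoGame A) → (xr → PoGame A) →
      Nonempty xl → Nonempty xr → PoGame A

namespace PoGame

variable {A : Type u}

/-- `G` is an atomic game. -/
def IsAtomic : PoGame A → Prop
  | atom _ => True
  | mk _ _ _ _ _ _ => False

/-- `G` is a left option of the game given as second argument. -/
def IsLeftOption (G : PoGame A) : PoGame A → Prop
  | atom _ => False
  | mk _ _ L _ _ _ => ∃ i, L i = G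

/-- `G` is a right option of the game given as second argument. -/
def IsRightOption (G : PoGame A) : PoGame A → Prop
  | atom _ => False
  | mk _ _ _ R _ _ => ∃ j, R j = G

section Order

variable [PartialOrder A]

mutual
  /-- `Le G H` is the relation `G ≤ H` on games over the poset `A`, defined by mutual
  recursion with `Lf` (the relation `G ⊲ H`): `G ≤ H` iff every left option `G^L`
  satisfies `G^L ⊲ H`, every right option `H^R` satisfies `G ⊲ H^R`, and if `G` or `H`
  is atomic then `G ⊲ H`. -/
  inductive Le : PoGame A → PoGame A → Prop
    | intro (G H : PoGame A)
        (hL : ∀ G', IsLeftOption G' G → Lf G' H)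
        (hR : ∀ H', IsRightOption H' H → Lf G H')
        (hA : IsAtomic G ∨ IsAtomic H → Lf G H) : Le G H

  /-- `Lf G H` is the relation `G ⊲ H` on games over the poset `A`: it holds iff some
  right option `G^R` satisfies `G^R ≤ H`, or some left option `H^L` satisfies `G ≤ H^L`,
  or `G = [a]` and `H = [b]` are atomic with `a ≤ b` in `A`. -/
  inductive Lf : PoGame A → PoGame A → Prop
    | rightOption (G H G' : PoGame A) (h : IsRightOption G' G) (hle : Le G' H) : Lf G H
    | leftOption (G H H' : PoGame A) (h : IsLeftOption H' H) (hle : Le G H') : Lf G H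
    | atom (a b : A) (hab : a ≤ b) : Lf (atom a) (atom b)
end

/-- Two games are equivalent if `G ≤ H` and `H ≤ G`. -/
def GEquiv (G H : PoGame A) : Prop := Le G H ∧ Le H G

/-- `G` is locally monotone if `G ≤ G^L` for every left option `G^L` and `G^R ≤ G` for
every right option `G^R`. -/
def LocallyMonotone (G : PoGame A) : Prop :=
  (∀ G', IsLeftOption G' G → Le G G') ∧ (∀ G', IsRightOption G' G → Le G' G)

/-- `G` is an option (left or right) of `H`. -/
def IsOption (G H : PoGame A) : Prop := IsLeftOption G H ∨ IsRightOption G H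

/-- `G` is a position of `H`: `H` itself, an option of `H`, an option of an option, etc. -/
def IsPosition (G H : PoGame A) : Prop := Relation.ReflTransGen IsOption G H

/-- `G` is monotone if every position of `G` is locally monotone. -/
def Monotone (G : PoGame A) : Prop := ∀ K, IsPosition K G → LocallyMonotone K

end Order

/-- The 5-element linearly ordered set `L5 = {-3, -2, -1, 0, 1}`. -/
abbrev L5 : Type := {a : ℤ // -3 ≤ a ∧ a ≤ 1}

/-- `G` has mean `C`: an atomic game `[a]` has mean `a`, and a composite game has mean `C`
iff every left option has mean `C + 1` and every right option has mean `C - 1`. -/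
def HasMean : PoGame L5 → ℤ → Prop
  | atom a, C => (a : ℤ) = C
  | mk _ _ L R _ _, C => (∀ i, HasMean (L i) (C + 1)) ∧ (∀ j, HasMean (R j) (C - 1))

/-- The game `⟨G | H⟩` with a single left option `G` and a single right option `H`. -/
def ofPair (G H : PoGame A) : PoGame A :=
  mk PUnit PUnit (fun _ => G) (fun _ => H) ⟨PUnit.unit⟩ ⟨PUnit.unit⟩

/-- `⋆ = ⟨-1 | -3⟩`. -/
def star : PoGame L5 := ofPair (atom ⟨-1, by norm_num⟩) (atom ⟨-3, by norm_num⟩)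

/-- `M(G) = ⟨1 | G⟩`. -/
def M (G : PoGame L5) : PoGame L5 := ofPair (atom ⟨1, by norm_num⟩) G

/-- `P(G) = ⟨G | -2⟩`. -/
def P (G : PoGame L5) : PoGame L5 := ofPair G (atom ⟨-2, by norm_num⟩)

/-- `P⋆(G) = ⟨G | ⋆⟩`. -/
def Pstar (G : PoGame L5) : PoGame L5 := ofPair G star

/-- `Pn n G = P G` if `n` is odd, `P⋆ G` if `n` is even. -/
def Pn (n : ℕ) (G : PoGame L5) : PoGame L5 := if Odd n then P G else Pstar G

/-- The sequence `G_0 = [0]`, `G_{n+1} = M (Pn n (G_n))`. -/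
def Gseq : ℕ → PoGame L5
  | 0 => atom ⟨0, by norm_num⟩
  | n + 1 => M (Pn n (Gseq n))

/-- The normal-play game obtained from a game over `L5` by replacing every atom by the
normal-play game `0 = { | }`, keeping the tree of left and right options. -/
def np : PoGame L5 → SetTheory.PGame.{0}
  | atom _ => 0
  | mk xl xr L R _ _ => SetTheory.PGame.mk xl xr (fun i => np (L i)) (fun j => np (R j))

end PoGame

/-!
Write `H_n = P_n(G_n) = ⟨G_n | t_n⟩`, with `t_n = -2` for odd `n` and `t_n = ⋆` for even `n`, so
that `G_{n+1} = ⟨1 | H_n⟩`. For `m ≤ n`, `G_m ≤ G_n` gives `G_m ⊲ H_n` and hence `G_m ≤ G_{n+1}`.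

For strictness one proves `¬ G_k ⊲ H_j` whenever `j + 2 ≤ k` (so `¬ G_k ≤ G_{j+1}`), by induction
on `k` and then on `j`. Now `G_{k+1} ⊲ H_j` means `G_{k+1} ≤ G_j` or `H_k ≤ H_j`. The first is
excluded by the induction on `j` (or, for `j = 0`, because `¬ 1 ≤ 0`). The second needs both
`G_k ⊲ H_j`, excluded by the induction on `k` when `k ≡ j (mod 2)` (then `j + 2 ≤ k`), and `H_k ⊲ t_j`, which fails
when `k ≢ j (mod 2)`: `P⋆(G) ⊲ -2` is false for every `G`, and `P(G_k) ⊲ ⋆` is false because no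
`G_n ⊲ -1`.
-/

namespace PoGame

section Options

variable {A : Type u} {G X Y : PoGame A}

@[simp]
theorem isLeftOption_atom (a : A) : ¬ IsLeftOption G (atom a) := id

@[simp]
theorem isRightOption_atom (a : A) : ¬ IsRightOption G (atom a) := id

@[simp]
theorem isLeftOption_ofPair : IsLeftOption G (ofPair X Y) ↔ G = X :=
  ⟨fun ⟨_, h⟩ => h.symm, fun h => ⟨PUnit.unit, h.symm⟩⟩

@[simp]
theorem isRightOption_ofPair : IsRightOption G (ofPair X Y) ↔ G = Y :=
  ⟨fun ⟨_, h⟩ => h.symm, fun h => ⟨PUnit.unit, h.symm⟩⟩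

@[simp]
theorem ofPair_ne_atom (a : A) : ofPair X Y ≠ atom a := nofun

@[simp]
theorem isAtomic_ofPair : ¬ IsAtomic (ofPair X Y) := id

end Options

section Order

variable {A : Type u} [PartialOrder A] {G H X Y : PoGame A}

theorem le_iff : Le G H ↔ (∀ G', IsLeftOption G' G → Lf G' H) ∧
    (∀ H', IsRightOption H' H → Lf G H') ∧ (IsAtomic G ∨ IsAtomic H → Lf G H) :=
  ⟨fun ⟨_, _, hL, hR, hA⟩ => ⟨hL, hR, hA⟩, fun ⟨hL, hR, hA⟩ => ⟨_, _, hL, hR, hA⟩⟩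

theorem lf_iff : Lf G H ↔ (∃ G', IsRightOption G' G ∧ Le G' H) ∨
    (∃ H', IsLeftOption H' H ∧ Le G H') ∨ ∃ a b, a ≤ b ∧ G = atom a ∧ H = atom b := by
  constructor
  · rintro (⟨_, _, G', h, hle⟩ | ⟨_, _, H', h, hle⟩ | ⟨a, b, hab⟩)
    exacts [Or.inl ⟨G', h, hle⟩, Or.inr (Or.inl ⟨H', h, hle⟩), Or.inr (Or.inr ⟨a, b, hab, rfl, rfl⟩)]
  · rintro (⟨G', h, hle⟩ | ⟨H', h, hle⟩ | ⟨a, b, hab, rfl, rfl⟩)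
    exacts [.rightOption _ _ G' h hle, .leftOption _ _ H' h hle, .atom a b hab]

theorem Le.refl : ∀ G : PoGame A, Le G G
  | atom a => ⟨_, _, by simp, by simp, fun _ => .atom a a le_rfl⟩
  | mk _ _ L R _ _ =>
    le_iff.2 ⟨fun _ ⟨i, hi⟩ => hi ▸ .leftOption _ _ (L i) ⟨i, rfl⟩ (Le.refl (L i)),
      fun _ ⟨j, hj⟩ => hj ▸ .rightOption _ _ (R j) ⟨j, rfl⟩ (Le.refl (R j)),
      fun h => (h.elim id id).elim⟩

@[simp]
theorem atom_lf_atom_iff {a b : A} : Lf (atom a) (atom b) ↔ a ≤ b := by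
  simp [lf_iff]

@[simp]
theorem atom_le_atom_iff {a b : A} : Le (atom a) (atom b) ↔ a ≤ b := by
  simp [le_iff, IsAtomic]

@[simp]
theorem ofPair_lf_atom_iff {b : A} : Lf (ofPair X Y) (atom b) ↔ Le Y (atom b) := by
  simp [lf_iff]

@[simp]
theorem ofPair_lf_ofPair_iff {Z W : PoGame A} :
    Lf (ofPair X Y) (ofPair Z W) ↔ Le Y (ofPair Z W) ∨ Le (ofPair X Y) Z := by
  simp [lf_iff]

@[simp]
theorem ofPair_le_ofPair_iff {Z W : PoGame A} :
    Le (ofPair X Y) (ofPair Z W) ↔ Lf X (ofPair Z W) ∧ Lf (ofPair X Y) W := by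
  simp [le_iff]

theorem atom_le_ofPair_iff {a : A} :
    Le (atom a) (ofPair X Y) ↔ Lf (atom a) Y ∧ Lf (atom a) (ofPair X Y) := by
  simp [le_iff, IsAtomic]

theorem lf_ofPair_of_le (h : Le G X) : Lf G (ofPair X Y) :=
  .leftOption _ _ X (isLeftOption_ofPair.2 rfl) h

theorem Le.lf_of_ofPair_le (h : Le (ofPair X Y) H) : Lf X H :=
  (le_iff.1 h).1 X (isLeftOption_ofPair.2 rfl)

theorem Le.lf_of_le_ofPair (h : Le G (ofPair X Y)) : Lf G Y :=
  (le_iff.1 h).2.1 Y (isRightOption_ofPair.2 rfl)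

end Order

def pnRight (n : ℕ) : PoGame L5 := if Odd n then atom ⟨-2, by norm_num⟩ else star

theorem Pn_eq_ofPair (n : ℕ) (G : PoGame L5) : Pn n G = ofPair G (pnRight n) := by
  unfold Pn pnRight P Pstar
  split_ifs <;> rfl

theorem not_Gseq_lf_neg_one : ∀ n, ¬ Lf (Gseq n) (atom ⟨-1, by norm_num⟩)
  | 0 => by simp [Gseq]
  | n + 1 => by
    rw [Gseq, M, ofPair_lf_atom_iff, Pn_eq_ofPair]
    exact fun h => not_Gseq_lf_neg_one n h.lf_of_ofPair_le

theorem not_P_lf_star {G : PoGame L5} (hG : ¬ Lf G (atom ⟨-1, by norm_num⟩)) :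
    ¬ Lf (P G) star := by
  simp only [P, star, ofPair_lf_ofPair_iff, atom_le_ofPair_iff, atom_lf_atom_iff]
  rintro (⟨h, -⟩ | h)
  · exact absurd h (by decide)
  · exact hG h.lf_of_ofPair_le

theorem not_Pstar_lf_neg_two (G : PoGame L5) : ¬ Lf (Pstar G) (atom ⟨-2, by norm_num⟩) := by
  simp only [Pstar, star, ofPair_lf_atom_iff]
  exact fun h => absurd (atom_lf_atom_iff.1 h.lf_of_ofPair_le) (by decide)

theorem not_Pn_lf_pnRight {G : PoGame L5} (hG : ¬ Lf G (atom ⟨-1, by norm_num⟩)) {k j : ℕ}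
    (hkj : ¬ (Odd k ↔ Odd j)) : ¬ Lf (Pn k G) (pnRight j) := by
  by_cases hj : Odd j
  · have hk : ¬ Odd k := fun hk => hkj (iff_of_true hk hj)
    simpa [Pn, pnRight, hk, hj] using not_Pstar_lf_neg_two G
  · have hk : Odd k := by_contra fun hk => hkj (iff_of_false hk hj)
    simpa [Pn, pnRight, hk, hj] using not_P_lf_star hG

theorem Gseq_succ (n : ℕ) : Gseq (n + 1) = ofPair (atom ⟨1, by norm_num⟩) (Pn n (Gseq n)) := rfl

theorem Gseq_le_Gseq {m n : ℕ} (hmn : m ≤ n) : Le (Gseq m) (Gseq n) := by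
  induction n with
  | zero => rw [Nat.le_zero.1 hmn]; exact Le.refl _
  | succ n ih =>
    rcases hmn.eq_or_lt with rfl | hmn
    · exact Le.refl _
    have hlf : Lf (Gseq m) (Pn n (Gseq n)) := by
      rw [Pn_eq_ofPair]
      exact lf_ofPair_of_le (ih (Nat.le_of_lt_succ hmn))
    cases m with
    | zero => exact atom_le_ofPair_iff.2 ⟨hlf, lf_ofPair_of_le (atom_le_atom_iff.2 (by decide))⟩
    | succ m => exact ofPair_le_ofPair_iff.2 ⟨lf_ofPair_of_le (Le.refl _), hlf⟩

theorem not_Gseq_succ_le_zero (k : ℕ) : ¬ Le (Gseq (k + 1)) (Gseq 0) :=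
  fun h => absurd (atom_lf_atom_iff.1 h.lf_of_ofPair_le) (by decide)

theorem not_Gseq_succ_lf_Pn_Gseq {k j : ℕ} (hjk : j < k)
    (h_lf : j + 2 ≤ k → ¬ Lf (Gseq k) (Pn j (Gseq j))) (h_le : ¬ Le (Gseq (k + 1)) (Gseq j)) :
    ¬ Lf (Gseq (k + 1)) (Pn j (Gseq j)) := by
  rw [Gseq_succ, Pn_eq_ofPair j, ofPair_lf_ofPair_iff, ← Pn_eq_ofPair j]
  rintro (h | h)
  · rw [Pn_eq_ofPair k, Pn_eq_ofPair j, ofPair_le_ofPair_iff, ← Pn_eq_ofPair j] at h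
    obtain ⟨h_left, h_right⟩ := h
    by_cases hkj : Odd k ↔ Odd j
    · have hk : j + 2 ≤ k := by
        by_contra! hk
        obtain rfl : k = j + 1 := by omega
        rw [Nat.odd_add_one] at hkj
        tauto
      exact h_lf hk h_left
    · rw [← Pn_eq_ofPair] at h_right
      exact not_Pn_lf_pnRight (not_Gseq_lf_neg_one k) hkj h_right
  · exact h_le h

theorem not_Gseq_lf_Pn_Gseq {k j : ℕ} (hjk : j + 2 ≤ k) : ¬ Lf (Gseq k) (Pn j (Gseq j)) := by
  induction k generalizing j with
  | zero => omega
  | succ k ihk =>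
    induction j with
    | zero => exact not_Gseq_succ_lf_Pn_Gseq (by omega) ihk (not_Gseq_succ_le_zero k)
    | succ j ihj =>
      exact not_Gseq_succ_lf_Pn_Gseq (by omega) ihk
        fun h => ihj (by omega) h.lf_of_le_ofPair

theorem not_Gseq_le_Gseq {m n : ℕ} (hmn : m < n) : ¬ Le (Gseq n) (Gseq m) := by
  obtain ⟨k, rfl⟩ : ∃ k, n = k + 1 := ⟨n - 1, by omega⟩
  cases m with
  | zero => exact not_Gseq_succ_le_zero k
  | succ m => exact fun h => not_Gseq_lf_Pn_Gseq (by omega) h.lf_of_le_ofPair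

end PoGame

open PoGame in
/-- For all `m < n`, `G_m ≤ G_n` and not `G_n ≤ G_m`; in particular, the games
`G_0, G_1, G_2, …` are pairwise non-equivalent. -/
theorem stmt_14 :
    (∀ m n : ℕ, m < n → Le (Gseq m) (Gseq n) ∧ ¬ Le (Gseq n) (Gseq m)) ∧
    (∀ m n : ℕ, m ≠ n → ¬ GEquiv (Gseq m) (Gseq n)) := by
  refine ⟨fun m n hmn => ⟨Gseq_le_Gseq hmn.le, not_Gseq_le_Gseq hmn⟩, fun m n hmn h => ?_⟩
  rcases hmn.lt_or_gt with hmn | hmn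
  exacts [not_Gseq_le_Gseq hmn h.2, not_Gseq_le_Gseq hmn h.1]
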